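/- Define the light-transform coefficient L(Δ1,Δ2;Δ,J) = −2πi·Γ(Δ+J−1)/(Γ((Δ+Δ1−Δ2+J)/2)·Γ((Δ−Δ1+Δ2+J)/2)). Then the product of the squared-light-transform phase factors satisfies e^{iπ(Δ1+Δ−Δ2+J)/2}·L(Δ1,Δ2;1−J,1−Δ)·e^{iπ(Δ1+(1−J)−Δ2+(1−Δ))/2}·L(Δ1,Δ2;Δ,J) = (π/((Δ+J−1)sin π(Δ+J)))·(e^{iπ(Δ1−Δ2)} − e^{iπ(Δ+J)})(e^{iπ(Δ1−Δ2)} − e^{−iπ(Δ+J)}). -/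

import Mathlib

/-- The light-transform coefficient
`L(Δ1,Δ2;Δ,J) = −2πi·Γ(Δ+J−1)/(Γ((Δ+Δ1−Δ2+J)/2)·Γ((Δ−Δ1+Δ2+J)/2))`. -/
noncomputable def Lcoef (Δ1 Δ2 Δ J : ℂ) : ℂ :=
  -2 * (Real.pi : ℂ) * Complex.I * Complex.Gamma (Δ + J - 1) /
    (Complex.Gamma ((Δ + Δ1 - Δ2 + J) / 2) * Complex.Gamma ((Δ - Δ1 + Δ2 + J) / 2))

set_option maxHeartbeats 1000000 in
/-- The square of the light transform on a three-point function:
`e^{iπ(Δ1+Δ−Δ2+J)/2}·L(Δ1,Δ2;1−J,1−Δ)·e^{iπ(Δ1+(1−J)−Δ2+(1−Δ))/2}·L(Δ1,Δ2;Δ,J)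
 = (π/((Δ+J−1)sin π(Δ+J)))·(e^{iπ(Δ1−Δ2)} − e^{iπ(Δ+J)})(e^{iπ(Δ1−Δ2)} − e^{−iπ(Δ+J)})`,
for parameters avoiding Gamma poles and with `Δ+J` not an integer. -/
theorem stmt_11 (Δ1 Δ2 Δ J : ℂ)
    (hnotint : ∀ n : ℤ, Δ + J ≠ (n : ℂ))
    (h1 : Complex.Gamma ((Δ + Δ1 - Δ2 + J) / 2) ≠ 0)
    (h2 : Complex.Gamma ((Δ - Δ1 + Δ2 + J) / 2) ≠ 0)
    (h3 : Complex.Gamma ((2 - Δ + Δ1 - Δ2 - J) / 2) ≠ 0)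
    (h4 : Complex.Gamma ((2 - Δ - Δ1 + Δ2 - J) / 2) ≠ 0) :
    Complex.exp (Complex.I * (Real.pi : ℂ) * (Δ1 + Δ - Δ2 + J) / 2) *
        Lcoef Δ1 Δ2 (1 - J) (1 - Δ) *
        Complex.exp (Complex.I * (Real.pi : ℂ) * (Δ1 + (1 - J) - Δ2 + (1 - Δ)) / 2) *
        Lcoef Δ1 Δ2 Δ J
      = (Real.pi : ℂ) / ((Δ + J - 1) * Complex.sin ((Real.pi : ℂ) * (Δ + J))) *
          ((Complex.exp (Complex.I * (Real.pi : ℂ) * (Δ1 - Δ2)) -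
              Complex.exp (Complex.I * (Real.pi : ℂ) * (Δ + J))) *
            (Complex.exp (Complex.I * (Real.pi : ℂ) * (Δ1 - Δ2)) -
              Complex.exp (-(Complex.I * (Real.pi : ℂ) * (Δ + J))))) := by
  have hπ : (Real.pi : ℂ) ≠ 0 := by
    simpa using Real.pi_ne_zero
  have hs0 : Δ + J - 1 ≠ 0 := by
    intro h; exact hnotint 1 (by push_cast; linear_combination h)
  have hs0' : (1 : ℂ) - Δ - J ≠ 0 := by
    intro h; exact hnotint 1 (by push_cast; linear_combination -h)
  have hsin : Complex.sin ((Real.pi:ℂ) * (Δ + J)) ≠ 0 := by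
    rw [Ne, Complex.sin_eq_zero_iff]
    rintro ⟨k, hk⟩
    exact hnotint k (mul_left_cancel₀ hπ (hk.trans (mul_comm _ _)))
  have hGs : Complex.Gamma (Δ + J - 1) ≠ 0 := by
    apply Complex.Gamma_ne_zero
    intro m h
    exact hnotint (1 - m) (by push_cast; linear_combination h)
  -- reflection for a
  have hA : Complex.Gamma ((Δ + Δ1 - Δ2 + J) / 2) *
      Complex.Gamma ((2 - Δ - Δ1 + Δ2 - J) / 2) =
      (Real.pi : ℂ) / Complex.sin ((Real.pi:ℂ) * ((Δ + Δ1 - Δ2 + J) / 2)) := by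
    have := Complex.Gamma_mul_Gamma_one_sub ((Δ + Δ1 - Δ2 + J) / 2)
    rw [show (1:ℂ) - (Δ + Δ1 - Δ2 + J) / 2 = (2 - Δ - Δ1 + Δ2 - J) / 2 by ring] at this
    exact this
  have hB : Complex.Gamma ((Δ - Δ1 + Δ2 + J) / 2) *
      Complex.Gamma ((2 - Δ + Δ1 - Δ2 - J) / 2) =
      (Real.pi : ℂ) / Complex.sin ((Real.pi:ℂ) * ((Δ - Δ1 + Δ2 + J) / 2)) := by
    have := Complex.Gamma_mul_Gamma_one_sub ((Δ - Δ1 + Δ2 + J) / 2)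
    rw [show (1:ℂ) - (Δ - Δ1 + Δ2 + J) / 2 = (2 - Δ + Δ1 - Δ2 - J) / 2 by ring] at this
    exact this
  have hsina : Complex.sin ((Real.pi:ℂ) * ((Δ + Δ1 - Δ2 + J) / 2)) ≠ 0 := by
    intro h; rw [h, div_zero] at hA; exact (mul_ne_zero h1 h4) hA
  have hsinb : Complex.sin ((Real.pi:ℂ) * ((Δ - Δ1 + Δ2 + J) / 2)) ≠ 0 := by
    intro h; rw [h, div_zero] at hB; exact (mul_ne_zero h2 h3) hB
  -- reflection for s
  have hS : Complex.Gamma (Δ + J - 1) * Complex.Gamma (1 - Δ - J) =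
      (Real.pi : ℂ) / ((Δ + J - 1) * Complex.sin ((Real.pi:ℂ) * (Δ + J))) := by
    have h5 : Complex.Gamma (2 - Δ - J) = (1 - Δ - J) * Complex.Gamma (1 - Δ - J) := by
      have := Complex.Gamma_add_one (1 - Δ - J) hs0'
      rw [show (1:ℂ) - Δ - J + 1 = 2 - Δ - J by ring] at this
      exact this
    have h6 := Complex.Gamma_mul_Gamma_one_sub (Δ + J - 1)
    rw [show (1:ℂ) - (Δ + J - 1) = 2 - Δ - J by ring, h5,
      show (Real.pi:ℂ) * (Δ + J - 1) = (Real.pi:ℂ) * (Δ + J) - Real.pi by ring,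
      Complex.sin_sub_pi, eq_div_iff (neg_ne_zero.2 hsin)] at h6
    rw [eq_div_iff (mul_ne_zero hs0 hsin)]
    linear_combination h6
  -- express "other" Gammas
  have hGa' : Complex.Gamma ((2 - Δ - Δ1 + Δ2 - J) / 2) =
      (Real.pi : ℂ) / (Complex.sin ((Real.pi:ℂ) * ((Δ + Δ1 - Δ2 + J) / 2)) *
        Complex.Gamma ((Δ + Δ1 - Δ2 + J) / 2)) := by
    rw [eq_div_iff (mul_ne_zero hsina h1)]
    rw [eq_div_iff hsina] at hA
    linear_combination hA
  have hGb' : Complex.Gamma ((2 - Δ + Δ1 - Δ2 - J) / 2) =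
      (Real.pi : ℂ) / (Complex.sin ((Real.pi:ℂ) * ((Δ - Δ1 + Δ2 + J) / 2)) *
        Complex.Gamma ((Δ - Δ1 + Δ2 + J) / 2)) := by
    rw [eq_div_iff (mul_ne_zero hsinb h2)]
    rw [eq_div_iff hsinb] at hB
    linear_combination hB
  have hGs' : Complex.Gamma (1 - Δ - J) =
      (Real.pi : ℂ) / ((Δ + J - 1) * Complex.sin ((Real.pi:ℂ) * (Δ + J)) *
        Complex.Gamma (Δ + J - 1)) := by
    rw [eq_div_iff (mul_ne_zero (mul_ne_zero hs0 hsin) hGs)]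
    rw [eq_div_iff (mul_ne_zero hs0 hsin)] at hS
    linear_combination hS
  -- unfold and rewrite
  rw [Lcoef, Lcoef,
    show (1:ℂ) - J + (1 - Δ) - 1 = 1 - Δ - J by ring,
    show ((1:ℂ) - J + Δ1 - Δ2 + (1 - Δ)) / 2 = (2 - Δ + Δ1 - Δ2 - J) / 2 by ring,
    show ((1:ℂ) - J - Δ1 + Δ2 + (1 - Δ)) / 2 = (2 - Δ - Δ1 + Δ2 - J) / 2 by ring,
    hGa', hGb', hGs']
  -- now introduce exponential variables
  obtain ⟨u, hu⟩ : ∃ x, Complex.exp (Complex.I * (Real.pi:ℂ) * (Δ + J) / 2) = x := ⟨_, rfl⟩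
  obtain ⟨w, hw⟩ : ∃ x, Complex.exp (Complex.I * (Real.pi:ℂ) * (Δ1 - Δ2) / 2) = x := ⟨_, rfl⟩
  have hu0 : u ≠ 0 := hu ▸ Complex.exp_ne_zero _
  have hw0 : w ≠ 0 := hw ▸ Complex.exp_ne_zero _
  have euw : ∀ (p q : ℤ), Complex.exp (Complex.I * (Real.pi:ℂ) * ((p:ℂ) * (Δ + J) + (q:ℂ) * (Δ1 - Δ2)) / 2) = u ^ p * w ^ q := by
    intro p q
    rw [show Complex.I * (Real.pi:ℂ) * ((p:ℂ) * (Δ + J) + (q:ℂ) * (Δ1 - Δ2)) / 2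
        = (p:ℂ) * (Complex.I * (Real.pi:ℂ) * (Δ + J) / 2) + (q:ℂ) * (Complex.I * (Real.pi:ℂ) * (Δ1 - Δ2) / 2) by ring,
      Complex.exp_add, ← hu, ← hw, ← Complex.exp_int_mul, ← Complex.exp_int_mul]
  have key : ∀ (p q : ℤ) (c : ℂ), c = Complex.I * (Real.pi:ℂ) * ((p:ℂ) * (Δ + J) + (q:ℂ) * (Δ1 - Δ2)) / 2 →
      Complex.exp c = u ^ p * w ^ q := by
    intro p q c hc; rw [hc, euw]
  have sa : Complex.sin ((Real.pi:ℂ) * ((Δ + Δ1 - Δ2 + J) / 2)) = ((u*w)⁻¹ - u*w) * Complex.I / 2 := by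
    rw [Complex.sin, key (-1) (-1) _ (by push_cast; ring), key 1 1 _ (by push_cast; ring)]
    simp only [zpow_neg, zpow_one, zpow_ofNat, zpow_zero]
    ring
  have sb : Complex.sin ((Real.pi:ℂ) * ((Δ - Δ1 + Δ2 + J) / 2)) = (u⁻¹*w - u*w⁻¹) * Complex.I / 2 := by
    rw [Complex.sin, key (-1) 1 _ (by push_cast; ring), key 1 (-1) _ (by push_cast; ring)]
    simp only [zpow_neg, zpow_one, zpow_ofNat, zpow_zero]
    ring
  have ss : Complex.sin ((Real.pi:ℂ) * (Δ + J)) = ((u*u)⁻¹ - u*u) * Complex.I / 2 := by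
    rw [Complex.sin, key (-2) 0 _ (by push_cast; ring), key 2 0 _ (by push_cast; ring)]
    simp only [zpow_neg, zpow_one, zpow_ofNat, zpow_zero]
    ring
  have p1 : Complex.exp (Complex.I * (Real.pi:ℂ) * (Δ1 + Δ - Δ2 + J) / 2) = u * w := by
    rw [key 1 1 _ (by push_cast; ring)]; simp only [zpow_one]
  have p2 : Complex.exp (Complex.I * (Real.pi:ℂ) * (Δ1 + (1 - J) - Δ2 + (1 - Δ)) / 2) = -(u⁻¹ * w) := by
    rw [show Complex.I * (Real.pi:ℂ) * (Δ1 + (1 - J) - Δ2 + (1 - Δ)) / 2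
        = Complex.I * (Real.pi:ℂ) * (((-1:ℤ):ℂ) * (Δ + J) + ((1:ℤ):ℂ) * (Δ1 - Δ2)) / 2
          + (Real.pi:ℂ) * Complex.I by push_cast; ring,
      Complex.exp_add, euw, Complex.exp_pi_mul_I]
    simp only [zpow_neg, zpow_one, zpow_ofNat, zpow_zero]
    ring
  have r1 : Complex.exp (Complex.I * (Real.pi:ℂ) * (Δ1 - Δ2)) = w * w := by
    rw [key 0 2 _ (by push_cast; ring)]; simp only [zpow_ofNat, zpow_zero]; ring
  have r2 : Complex.exp (Complex.I * (Real.pi:ℂ) * (Δ + J)) = u * u := by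
    rw [key 2 0 _ (by push_cast; ring)]; simp only [zpow_ofNat, zpow_zero]; ring
  have r3 : Complex.exp (-(Complex.I * (Real.pi:ℂ) * (Δ + J))) = (u * u)⁻¹ := by
    rw [key (-2) 0 _ (by push_cast; ring)]; simp only [zpow_neg, zpow_ofNat, zpow_zero]; ring
  have sa2 : Complex.sin ((Real.pi:ℂ) * ((Δ + Δ1 - Δ2 + J) / 2))
      = ((1:ℂ) - (u*w)^2) * Complex.I / (2*(u*w)) := by
    rw [sa]; field_simp
  have sb2 : Complex.sin ((Real.pi:ℂ) * ((Δ - Δ1 + Δ2 + J) / 2))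
      = (w^2 - u^2) * Complex.I / (2*(u*w)) := by
    rw [sb]; field_simp
  have ss2 : Complex.sin ((Real.pi:ℂ) * (Δ + J))
      = ((1:ℂ) - u^4) * Complex.I / (2*u^2) := by
    rw [ss]; field_simp
  have n1 : (1:ℂ) - (u*w)^2 ≠ 0 := by
    intro h
    rw [sa2] at hsina
    exact hsina (by rw [h]; simp)
  have n2 : w^2 - u^2 ≠ 0 := by
    intro h
    rw [sb2] at hsinb
    exact hsinb (by rw [h]; simp)
  have n3 : (1:ℂ) - u^4 ≠ 0 := by
    intro h
    rw [ss2] at hsin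
    exact hsin (by rw [h]; simp)
  have n1' : (u*w)^2 - 1 ≠ 0 := fun h => n1 (by linear_combination -h)
  have n2' : u^2 - w^2 ≠ 0 := fun h => n2 (by linear_combination -h)
  rw [p1, p2, sa2, sb2, r1, r2, r3]
  generalize hS : Complex.sin ((Real.pi:ℂ) * (Δ + J)) = S at hsin ⊢
  generalize hG1 : Complex.Gamma ((Δ + Δ1 - Δ2 + J) / 2) = G1 at h1 ⊢
  generalize hG2 : Complex.Gamma ((Δ - Δ1 + Δ2 + J) / 2) = G2 at h2 ⊢
  generalize hG3 : Complex.Gamma (Δ + J - 1) = G3 at hGs ⊢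
  generalize hT : Δ + J - 1 = t at hs0 ⊢
  field_simp [hu0, hw0, h1, h2, hGs, hs0, hsin, hπ, n1, n2, n1', n2', Complex.I_ne_zero]
  have hI4 : Complex.I ^ 4 = 1 := by
    rw [show (4:ℕ) = 2*2 from rfl, pow_mul, Complex.I_sq]; norm_num
  linear_combination (-(1 - u^2*w^2)) * hI4
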